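/- Let Q ∈ SU(3,1), let λ ∈ ℂ with Re(λ) > 0, φ ∈ ℝ, and let A = Q·E(λ,φ)·Q⁻¹, so that A is loxodromic with eigen-data a_A = Q·e₁, x_A = Q·e₂, y_A = Q·e₃, r_A = Q·e₄. Let B ∈ SU(3,1) be such that the pair (A, B·A⁻¹·B⁻¹) is non-singular, where B·A⁻¹·B⁻¹ carries the eigen-data a = B·r_A, x = B·x_A, y = B·y_A, r = B·a_A. Let κ, κ′ ∈ ℂ with Im(κ), Im(κ′) ∈ (−π,π], let ψ, ψ′ ∈ (−π,π], and set K = Q·E(κ,ψ)·Q⁻¹ and K′ = Q·E(κ′,ψ′)·Q⁻¹. Then there exists D ∈ SU(3,1) with D·A·D⁻¹ = A and D·(B·K)·D⁻¹ = B·K′ if and only if κ = κ′ and ψ = ψ′. -/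

import Mathlib

open Complex ComplexConjugate Matrix Polynomial

noncomputable section

abbrev Vec4 := Fin 4 → ℂ
abbrev Mat4 := Matrix (Fin 4) (Fin 4) ℂ

/-- The Hermitian form of signature (3,1):
`⟨z,w⟩ = z₁·conj(w₄) + z₂·conj(w₂) + z₃·conj(w₃) + z₄·conj(w₁)`. -/
def hermForm (z w : Vec4) : ℂ :=
  z 0 * conj (w 3) + z 1 * conj (w 1) + z 2 * conj (w 2) + z 3 * conj (w 0)

/-- The matrix of the Hermitian form. -/
def Hmat : Mat4 := !![0,0,0,1; 0,1,0,0; 0,0,1,0; 1,0,0,0]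

/-- `A ∈ SU(3,1)`: `(conj A)ᵀ H A = H` and `det A = 1`. -/
def isSU31 (A : Mat4) : Prop := Aᴴ * Hmat * A = Hmat ∧ A.det = 1

/-- Koranyi-Riemann cross-ratio. -/
def crossRatio (z1 z2 z3 z4 : Vec4) : ℂ :=
  (hermForm z3 z1 * hermForm z4 z2) / (hermForm z4 z1 * hermForm z3 z2)

/-- No two of the four vectors are complex multiples of one another. -/
def PairwiseNotProp4 (z1 z2 z3 z4 : Vec4) : Prop :=
  (∀ c : ℂ, z1 ≠ c • z2) ∧ (∀ c : ℂ, z1 ≠ c • z3) ∧ (∀ c : ℂ, z1 ≠ c • z4) ∧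
  (∀ c : ℂ, z2 ≠ c • z3) ∧ (∀ c : ℂ, z2 ≠ c • z4) ∧ (∀ c : ℂ, z3 ≠ c • z4)

/-- `u` is a nonzero complex multiple of `v`. -/
def PropNZ (u v : Vec4) : Prop := ∃ c : ℂ, c ≠ 0 ∧ u = c • v

/-- A loxodromic element of SU(3,1), equipped with its eigen-data. -/
structure Lox where
  M : Mat4
  hM : isSU31 M
  r : ℝ
  θ : ℝ
  φ : ℝ
  hr : 1 < r
  a : Vec4
  x : Vec4
  y : Vec4
  rp : Vec4
  hbasis : LinearIndependent ℂ ![a, x, y, rp]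
  ha : M.mulVec a = ((r : ℂ) * Complex.exp ((θ : ℂ) * Complex.I)) • a
  hx : M.mulVec x = Complex.exp ((φ : ℂ) * Complex.I) • x
  hy : M.mulVec y = Complex.exp (-(2*(θ : ℂ)+(φ : ℂ)) * Complex.I) • y
  hrp : M.mulVec rp = ((r : ℂ)⁻¹ * Complex.exp ((θ : ℂ) * Complex.I)) • rp
  hnull_a : hermForm a a = 0
  hnull_r : hermForm rp rp = 0
  hx1 : hermForm x x = 1
  hy1 : hermForm y y = 1

/-- Goldman's eta invariant `η(a,r;x)` for null `a`, `r` and positive `x`. -/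
def etaV (aA rA xB : Vec4) : ℂ :=
  (hermForm aA xB * hermForm xB rA) / (hermForm aA rA * hermForm xB xB)

def eta1 (A B : Lox) : ℂ := etaV A.a A.rp B.x
def eta2 (A B : Lox) : ℂ := etaV A.a A.rp B.y
def nu1 (A B : Lox) : ℂ := etaV B.a B.rp A.x
def nu2 (A B : Lox) : ℂ := etaV B.a B.rp A.y

def X1 (A B : Lox) : ℂ := crossRatio B.a A.a A.rp B.rp
def X2 (A B : Lox) : ℂ := crossRatio B.a A.rp A.a B.rp
def X3 (A B : Lox) : ℂ := crossRatio A.a A.rp B.a B.rp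

def alpha1 (A B : Lox) : ℂ := crossRatio A.rp A.a B.x B.a
def alpha2 (A B : Lox) : ℂ := crossRatio A.rp A.a B.y B.a
def beta1 (A B : Lox) : ℂ := crossRatio B.rp B.a A.x A.a
def beta2 (A B : Lox) : ℂ := crossRatio B.rp B.a A.y A.a

def etaIdx (i : Fin 2) (A B : Lox) : ℂ := if i = 0 then eta1 A B else eta2 A B
def nuIdx (j : Fin 2) (A B : Lox) : ℂ := if j = 0 then nu1 A B else nu2 A B
def alphaIdx (i : Fin 2) (A B : Lox) : ℂ := if i = 0 then alpha1 A B else alpha2 A B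
def betaIdx (j : Fin 2) (A B : Lox) : ℂ := if j = 0 then beta1 A B else beta2 A B

/-- Non-singularity of the eigen-data of a pair of loxodromic elements. -/
def NonSingularV (aA xA yA rA aB xB yB rB : Vec4) : Prop :=
  PairwiseNotProp4 aA rA aB rB ∧
  LinearIndependent ℂ ![aA, rA, aB, rB] ∧
  (etaV aA rA xB ≠ 0 ∨ etaV aA rA yB ≠ 0) ∧
  (etaV aB rB xA ≠ 0 ∨ etaV aB rB yA ≠ 0)

/-- The pair `(A,B)` of loxodromic elements is non-singular. -/
def NonSingular (A B : Lox) : Prop :=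
  NonSingularV A.a A.x A.y A.rp B.a B.x B.y B.rp

/-- trace. -/
def tau (A : Mat4) : ℂ := A.trace

/-- `σ_A = (tr(A)² − tr(A²))/2`. -/
def sigma (A : Mat4) : ℂ := ((A.trace)^2 - (A^2).trace)/2

/-- Cartan's angular invariant. -/
def cartan (z1 z2 z3 : Vec4) : ℝ :=
  Complex.arg (-(hermForm z1 z2 * hermForm z2 z3 * hermForm z3 z1))

/-- The diagonal matrix `E(κ,ψ)`. -/
def Emat (κ : ℂ) (ψ : ℝ) : Mat4 :=
  Matrix.diagonal
    ![Complex.exp κ,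
      Complex.exp (-((ψ : ℂ) * Complex.I) + (conj κ - κ)/2),
      Complex.exp ((ψ : ℂ) * Complex.I + (conj κ - κ)/2),
      Complex.exp (-(conj κ))]

/-- Anti-holomorphic isometric involution `z ↦ M·conj(z)` of `ℂ^{3,1}`. -/
def AntiHolInv (M : Mat4) : Prop :=
  M * (M.map (starRingEnd ℂ)) = 1 ∧
  ∀ z w : Vec4, hermForm (M.mulVec (star z)) (M.mulVec (star w)) = conj (hermForm z w)

/-!
Conjugating by `Q` reduces the problem to `C = Q⁻¹ D Q`, `P = Q⁻¹ B Q` and the diagonal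
matrices `E(·,·)`. Since `Re λ > 0`, the eigenvalues `e^λ` and `e^{-conj λ}` of `E(λ,φ)` are
separated in modulus from each other and from the two unit-modulus ones, so `C`, which commutes
with `E(λ,φ)`, is block diagonal `diag(c, M, c')`; as `C` preserves the form, `conj c · c' = 1` and
`M` is unitary. Row 0 of `C P E(κ,ψ) = P E(κ',ψ') C` reads `c • v = w ᵥ* M` with `‖v‖ = ‖w‖ ≠ 0`
(this is where `η ≠ 0` enters), so `|c| = 1` and `c' = c`. Column 0 of `P` is a nonzero null vector,
so `P₀₀ ≠ 0` or `P₃₀ ≠ 0`, and comparing that entry gives `e^κ = e^κ'`. Then the middle rows say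
that `M` acts as `c` on two vectors which are independent by non-singularity, so `C = c • 1` and
`E(κ,ψ) = E(κ,ψ')`. The strip conditions turn equal exponentials into equal parameters.
-/

open scoped ComplexOrder

def PreservesHmat (X : Mat4) : Prop := Xᴴ * Hmat * X = Hmat

lemma PreservesHmat.mul {X Y : Mat4} (hX : PreservesHmat X) (hY : PreservesHmat Y) :
    PreservesHmat (X * Y) := by
  unfold PreservesHmat at *
  calc (X * Y)ᴴ * Hmat * (X * Y) = Yᴴ * (Xᴴ * Hmat * X) * Y := by
        simp only [conjTranspose_mul, Matrix.mul_assoc]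
    _ = Hmat := by rw [hX, hY]

lemma PreservesHmat.inv {X : Mat4} (hX : PreservesHmat X) (hdet : IsUnit X.det) :
    PreservesHmat X⁻¹ := by
  unfold PreservesHmat at *
  calc X⁻¹ᴴ * Hmat * X⁻¹ = (X * X⁻¹)ᴴ * Hmat * (X * X⁻¹) := by
        conv_lhs => rw [← hX]
        simp only [conjTranspose_mul, Matrix.mul_assoc]
    _ = Hmat := by simp [mul_nonsing_inv _ hdet]

lemma PreservesHmat.inv_conj {Q X : Mat4} (hQ : PreservesHmat Q) (hQdet : IsUnit Q.det)
    (hX : PreservesHmat X) : PreservesHmat (Q⁻¹ * X * Q) :=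
  ((hQ.inv hQdet).mul hX).mul hQ

lemma Hmat_mulVec (z : Vec4) : Hmat *ᵥ z = ![z 3, z 1, z 2, z 0] := by
  ext i; fin_cases i <;> simp [Hmat, mulVec, dotProduct, Fin.sum_univ_four]

lemma hermForm_eq_dotProduct (z w : Vec4) : hermForm z w = star w ⬝ᵥ Hmat *ᵥ z := by
  simp only [Hmat_mulVec, hermForm, dotProduct, Fin.sum_univ_four, Pi.star_apply,
    starRingEnd_apply, Matrix.cons_val]
  ring

lemma hermForm_mulVec {Q : Mat4} (hQ : PreservesHmat Q) (z w : Vec4) :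
    hermForm (Q *ᵥ z) (Q *ᵥ w) = hermForm z w := by
  rw [hermForm_eq_dotProduct, hermForm_eq_dotProduct, star_mulVec, mulVec_mulVec,
    dotProduct_mulVec, vecMul_vecMul, ← Matrix.mul_assoc, hQ, dotProduct_mulVec]

lemma hermForm_single_three (z : Vec4) : hermForm z (Pi.single 3 1) = z 0 := by
  simp [hermForm]

lemma apply_zero_ne_zero_or_apply_three_ne_zero {v : Vec4} (hnull : hermForm v v = 0)
    (hv : v ≠ 0) : v 0 ≠ 0 ∨ v 3 ≠ 0 := by
  by_contra! h
  have hmid : star ![v 1, v 2] ⬝ᵥ ![v 1, v 2] = 0 := by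
    simpa [hermForm, h, dotProduct, Fin.sum_univ_two, mul_comm] using hnull
  rw [dotProduct_star_self_eq_zero] at hmid
  apply hv
  ext i
  fin_cases i
  exacts [h.1, congrFun hmid 0, congrFun hmid 1, h.2]

lemma PreservesHmat.apply_zero_zero_ne_zero_or {P : Mat4} (hP : PreservesHmat P)
    (hcol : P *ᵥ Pi.single 0 1 ≠ 0) : P 0 0 ≠ 0 ∨ P 3 0 ≠ 0 := by
  have hnull : hermForm (P *ᵥ Pi.single 0 1) (P *ᵥ Pi.single 0 1) = 0 := by
    rw [hermForm_mulVec hP]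
    simp [hermForm]
  simpa using apply_zero_ne_zero_or_apply_three_ne_zero hnull hcol

section Conjugation

variable {Q : Mat4}

lemma inv_conj_mul_inv_conj (hQ : IsUnit Q.det) (X Y : Mat4) :
    (Q⁻¹ * X * Q) * (Q⁻¹ * Y * Q) = Q⁻¹ * (X * Y) * Q := by
  simp only [Matrix.mul_assoc, mul_nonsing_inv_cancel_left _ _ hQ]

lemma inv_conj_conj (hQ : IsUnit Q.det) (X : Mat4) : Q⁻¹ * (Q * X * Q⁻¹) * Q = X := by
  simp only [Matrix.mul_assoc, nonsing_inv_mul_cancel_left _ _ hQ, nonsing_inv_mul _ hQ,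
    Matrix.mul_one]

lemma inv_conj_mul_eq_of_conj_eq {D X Y : Mat4} (hQ : IsUnit Q.det) (hD : IsUnit D.det)
    (h : D * X * D⁻¹ = Y) : (Q⁻¹ * D * Q) * (Q⁻¹ * X * Q) = (Q⁻¹ * Y * Q) * (Q⁻¹ * D * Q) := by
  subst h
  rw [inv_conj_mul_inv_conj hQ, inv_conj_mul_inv_conj hQ, nonsing_inv_mul_cancel_right _ _ hD]

lemma mulVec_inv_conj (hQ : IsUnit Q.det) (B : Mat4) (v : Vec4) :
    Q *ᵥ ((Q⁻¹ * B * Q) *ᵥ v) = B *ᵥ (Q *ᵥ v) := by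
  rw [mulVec_mulVec, mulVec_mulVec, ← Matrix.mul_assoc, ← Matrix.mul_assoc,
    mul_nonsing_inv _ hQ, Matrix.one_mul]

end Conjugation

lemma apply_eq_zero_of_mul_diagonal_eq {R n : Type*} [CommRing R] [NoZeroDivisors R] [Fintype n]
    [DecidableEq n] {C : Matrix n n R} {d : n → R} (h : C * diagonal d = diagonal d * C)
    {i j : n} (hij : d i ≠ d j) : C i j = 0 := by
  have hij' : C i j * (d j - d i) = 0 := by
    have := congrFun₂ h i j
    rw [mul_diagonal, diagonal_mul] at this
    linear_combination this
  exact (mul_eq_zero.mp hij').resolve_right (sub_ne_zero.mpr hij.symm)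

lemma eq_smul_one_of_mul_eq_smul {n R : Type*} [Fintype n] [DecidableEq n] [CommRing R]
    {M U : Matrix n n R} {c : R} (hU : IsUnit U.det) (h : M * U = c • U) : M = c • 1 := by
  rw [← mul_nonsing_inv_cancel_right U M hU, h, smul_mul, mul_nonsing_inv U hU]

section Unitary

variable {n : Type*} [Fintype n]

lemma star_dotProduct_self_congr {v w : n → ℂ} (h : ∀ i, ‖v i‖ = ‖w i‖) :
    star v ⬝ᵥ v = star w ⬝ᵥ w := by
  simp only [dotProduct, Pi.star_apply, ← starRingEnd_apply, Complex.conj_mul', h]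

variable [DecidableEq n] {M : Matrix n n ℂ}

lemma star_vecMul_dotProduct_vecMul (hM : M ∈ unitaryGroup n ℂ) (w : n → ℂ) :
    star (w ᵥ* M) ⬝ᵥ (w ᵥ* M) = star w ⬝ᵥ w := by
  rw [star_vecMul, dotProduct_comm, dotProduct_mulVec, vecMul_vecMul, ← star_eq_conjTranspose,
    mem_unitaryGroup_iff.mp hM, vecMul_one, dotProduct_comm]

lemma star_mul_self_eq_one_of_smul_eq_vecMul (hM : M ∈ unitaryGroup n ℂ) {c : ℂ}
    {v w : n → ℂ} (hvw : star v ⬝ᵥ v = star w ⬝ᵥ w) (hv : v ≠ 0) (h : c • v = w ᵥ* M) :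
    star c * c = 1 := by
  have : (star c * c) * (star v ⬝ᵥ v) = 1 * (star v ⬝ᵥ v) := by
    calc (star c * c) * (star v ⬝ᵥ v) = star (c • v) ⬝ᵥ (c • v) := by
          rw [star_smul, smul_dotProduct, dotProduct_smul, smul_eq_mul, smul_eq_mul, mul_assoc]
      _ = 1 * (star v ⬝ᵥ v) := by rw [h, star_vecMul_dotProduct_vecMul hM, hvw, one_mul]
  exact mul_right_cancel₀ (dotProduct_star_self_eq_zero.not.mpr hv) this

end Unitary

lemma eq_of_exp_eq_of_im_mem {x y : ℂ} (hx : -Real.pi < x.im ∧ x.im ≤ Real.pi)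
    (hy : -Real.pi < y.im ∧ y.im ≤ Real.pi) (h : Complex.exp x = Complex.exp y) : x = y := by
  rw [← Complex.log_exp hx.1 hx.2, ← Complex.log_exp hy.1 hy.2, h]

def Ediag (κ : ℂ) (ψ : ℝ) : Vec4 :=
  ![Complex.exp κ,
    Complex.exp (-((ψ : ℂ) * Complex.I) + (conj κ - κ)/2),
    Complex.exp ((ψ : ℂ) * Complex.I + (conj κ - κ)/2),
    Complex.exp (-(conj κ))]

lemma Emat_eq_diagonal (κ : ℂ) (ψ : ℝ) : Emat κ ψ = diagonal (Ediag κ ψ) := rfl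

def eigenWeight : Fin 4 → ℝ := ![1, 0, 0, -1]

lemma norm_Ediag (κ : ℂ) (ψ : ℝ) (i : Fin 4) :
    ‖Ediag κ ψ i‖ = Real.exp (κ.re * eigenWeight i) := by
  fin_cases i <;> simp [Ediag, eigenWeight, Complex.norm_exp]

lemma Ediag_ne_zero (κ : ℂ) (ψ : ℝ) (i : Fin 4) : Ediag κ ψ i ≠ 0 := by
  rw [← norm_ne_zero_iff, norm_Ediag]
  exact (Real.exp_pos _).ne'

lemma Ediag_ne_of_eigenWeight_ne {lam : ℂ} (hlam : 0 < lam.re) (phi : ℝ) {i j : Fin 4}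
    (hij : eigenWeight i ≠ eigenWeight j) : Ediag lam phi i ≠ Ediag lam phi j := by
  intro h
  have := congrArg norm h
  rw [norm_Ediag, norm_Ediag, Real.exp_eq_exp] at this
  exact hij (mul_left_cancel₀ hlam.ne' this)

lemma eq_of_Emat_eq {κ : ℂ} {ψ ψ' : ℝ} (hψ : -Real.pi < ψ ∧ ψ ≤ Real.pi)
    (hψ' : -Real.pi < ψ' ∧ ψ' ≤ Real.pi) (h : Emat κ ψ = Emat κ ψ') : ψ = ψ' := by
  have h2 := congrFun₂ h 2 2
  simp only [Emat_eq_diagonal, diagonal_apply_eq, Ediag, Complex.exp_add] at h2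
  have := eq_of_exp_eq_of_im_mem (x := ψ * Complex.I) (y := ψ' * Complex.I) (by simpa using hψ)
    (by simpa using hψ') (mul_right_cancel₀ (Complex.exp_ne_zero _) h2)
  exact_mod_cast mul_right_cancel₀ Complex.I_ne_zero this

def midIdx : Fin 2 → Fin 4 := ![1, 2]

def blockMat (c : ℂ) (M : Matrix (Fin 2) (Fin 2) ℂ) (c' : ℂ) : Mat4 :=
  !![c, 0, 0, 0; 0, M 0 0, M 0 1, 0; 0, M 1 0, M 1 1, 0; 0, 0, 0, c']

lemma eq_blockMat_of_commute_Emat {lam : ℂ} (hlam : 0 < lam.re) (phi : ℝ) {C : Mat4}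
    (h : C * Emat lam phi = Emat lam phi * C) :
    C = blockMat (C 0 0) (C.submatrix midIdx midIdx) (C 3 3) := by
  have hzero (i j : Fin 4) (hij : eigenWeight i ≠ eigenWeight j) : C i j = 0 :=
    apply_eq_zero_of_mul_diagonal_eq h (Ediag_ne_of_eigenWeight_ne hlam phi hij)
  ext i j
  fin_cases i <;> fin_cases j <;>
    first | rfl | exact hzero _ _ (by norm_num [eigenWeight])

lemma blockMat_smul_one (c : ℂ) : blockMat c (c • 1) c = c • 1 := by
  ext i j
  fin_cases i <;> fin_cases j <;> simp [blockMat]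

section BlockMat

variable {c c' : ℂ} {M : Matrix (Fin 2) (Fin 2) ℂ}

lemma PreservesHmat.of_blockMat (h : PreservesHmat (blockMat c M c')) :
    star c * c' = 1 ∧ M ∈ unitaryGroup (Fin 2) ℂ := by
  have hij (i j : Fin 4) := congrFun₂ h i j
  simp only [blockMat, Hmat, mul_apply, Fin.sum_univ_four, conjTranspose_apply] at hij
  refine ⟨by simpa using hij 0 3, mem_unitaryGroup_iff'.mpr ?_⟩
  ext i j
  have := hij (midIdx i) (midIdx j)
  fin_cases i <;> fin_cases j <;> simpa [midIdx, mul_apply, Fin.sum_univ_two] using this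

variable (X : Mat4)

lemma blockMat_mul_apply_zero (j : Fin 4) : (blockMat c M c' * X) 0 j = c * X 0 j := by
  simp [blockMat, mul_apply, Fin.sum_univ_four]

lemma blockMat_mul_apply_three (j : Fin 4) : (blockMat c M c' * X) 3 j = c' * X 3 j := by
  simp [blockMat, mul_apply, Fin.sum_univ_four]

lemma blockMat_mul_apply_midIdx (i : Fin 2) (j : Fin 4) :
    (blockMat c M c' * X) (midIdx i) j = (M *ᵥ fun k => X (midIdx k) j) i := by
  fin_cases i <;> simp [blockMat, midIdx, mul_apply, Fin.sum_univ_four, mulVec, dotProduct]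

lemma mul_blockMat_apply_zero (i : Fin 4) : (X * blockMat c M c') i 0 = X i 0 * c := by
  simp [blockMat, mul_apply, Fin.sum_univ_four]

lemma mul_blockMat_apply_three (i : Fin 4) : (X * blockMat c M c') i 3 = X i 3 * c' := by
  simp [blockMat, mul_apply, Fin.sum_univ_four]

lemma mul_blockMat_apply_midIdx (i : Fin 4) (j : Fin 2) :
    (X * blockMat c M c') i (midIdx j) = ((fun k => X i (midIdx k)) ᵥ* M) j := by
  fin_cases j <;> simp [blockMat, midIdx, mul_apply, Fin.sum_univ_four, vecMul, dotProduct]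

end BlockMat

section BlockMatEquation

variable {c c' : ℂ} {M : Matrix (Fin 2) (Fin 2) ℂ} {P : Mat4} {κ κ' : ℂ} {ψ ψ' : ℝ}

lemma star_mul_self_eq_one_of_blockMat (hM : M ∈ unitaryGroup (Fin 2) ℂ)
    (hrow : P 0 1 ≠ 0 ∨ P 0 2 ≠ 0)
    (h : blockMat c M c' * (P * Emat κ ψ) = P * Emat κ' ψ' * blockMat c M c') :
    star c * c = 1 := by
  refine star_mul_self_eq_one_of_smul_eq_vecMul hM
    (v := fun j => P 0 (midIdx j) * Ediag κ ψ (midIdx j))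
    (w := fun j => P 0 (midIdx j) * Ediag κ' ψ' (midIdx j)) ?_ ?_ ?_
  · refine star_dotProduct_self_congr fun j => ?_
    fin_cases j <;> simp [norm_Ediag, midIdx, eigenWeight]
  · intro hv
    rcases hrow with h1 | h2
    · exact h1 (by simpa [midIdx, Ediag_ne_zero] using congrFun hv 0)
    · exact h2 (by simpa [midIdx, Ediag_ne_zero] using congrFun hv 1)
  · ext j
    have hj := congrFun₂ h 0 (midIdx j)
    rw [blockMat_mul_apply_zero, mul_blockMat_apply_midIdx] at hj
    simpa [Emat_eq_diagonal, mul_assoc] using hj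

lemma exp_eq_exp_of_blockMat (hcorner : P 0 0 ≠ 0 ∨ P 3 0 ≠ 0) (hc : c ≠ 0)
    (h : blockMat c M c * (P * Emat κ ψ) = P * Emat κ' ψ' * blockMat c M c) :
    Complex.exp κ = Complex.exp κ' := by
  have h0 := congrFun₂ h 0 0
  have h3 := congrFun₂ h 3 0
  rw [blockMat_mul_apply_zero, mul_blockMat_apply_zero] at h0
  rw [blockMat_mul_apply_three, mul_blockMat_apply_zero] at h3
  simp only [Emat_eq_diagonal, mul_diagonal, Ediag, Matrix.cons_val_zero] at h0 h3
  rcases hcorner with h00 | h30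
  · exact mul_left_cancel₀ (mul_ne_zero hc h00) (by linear_combination h0)
  · exact mul_left_cancel₀ (mul_ne_zero hc h30) (by linear_combination h3)

lemma eq_smul_one_of_blockMat (hU : IsUnit (P.submatrix midIdx ![0, 3]).det)
    (h : blockMat c M c * (P * Emat κ ψ) = P * Emat κ ψ' * blockMat c M c) : M = c • 1 := by
  refine eq_smul_one_of_mul_eq_smul hU ?_
  ext i j
  fin_cases j
  · have hi := congrFun₂ h (midIdx i) 0
    rw [blockMat_mul_apply_midIdx, mul_blockMat_apply_zero] at hi
    simp only [Emat_eq_diagonal, mul_diagonal] at hi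
    simp only [mulVec, dotProduct, mul_apply, Fin.sum_univ_two, submatrix_apply,
      Matrix.smul_apply, smul_eq_mul, Ediag, Fin.isValue, Fin.zero_eta, cons_val_zero] at hi ⊢
    apply mul_right_cancel₀ (Complex.exp_ne_zero κ)
    linear_combination hi
  · have hi := congrFun₂ h (midIdx i) 3
    rw [blockMat_mul_apply_midIdx, mul_blockMat_apply_three] at hi
    simp only [Emat_eq_diagonal, mul_diagonal] at hi
    simp only [mulVec, dotProduct, mul_apply, Fin.sum_univ_two, submatrix_apply,
      Matrix.smul_apply, smul_eq_mul, Ediag, Fin.isValue, Fin.mk_one, cons_val, cons_val_one,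
      cons_val_fin_one] at hi ⊢
    apply mul_right_cancel₀ (Complex.exp_ne_zero (-conj κ))
    linear_combination hi

end BlockMatEquation

lemma isUnit_det_submatrix_of_linearIndependent {P : Mat4}
    (h : LinearIndependent ℂ
      ![Pi.single 0 1, Pi.single 3 1, P *ᵥ Pi.single 3 1, P *ᵥ Pi.single 0 1]) :
    IsUnit (P.submatrix midIdx ![0, 3]).det := by
  rw [isUnit_iff_ne_zero, Ne, ← exists_mulVec_eq_zero_iff]
  rintro ⟨v, hv, hUv⟩
  have h1 := congrFun hUv 0
  have h2 := congrFun hUv 1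
  simp only [mulVec, dotProduct, midIdx, submatrix_apply, Fin.sum_univ_two, cons_val,
    Pi.zero_apply] at h1 h2
  have hcoeff := Fintype.linearIndependent_iff.mp h
    ![-(P 0 0 * v 0 + P 0 3 * v 1), -(P 3 0 * v 0 + P 3 3 * v 1), v 1, v 0] (by
      ext k
      fin_cases k <;> simp [Fin.sum_univ_four] <;>
        first | ring1 | linear_combination h1 | linear_combination h2)
  exact hv (by ext k; fin_cases k; exacts [hcoeff 3, hcoeff 2])

theorem eq_of_commute_Emat {C P : Mat4} {lam κ κ' : ℂ} {phi ψ ψ' : ℝ} (hlam : 0 < lam.re)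
    (hκ : -Real.pi < κ.im ∧ κ.im ≤ Real.pi) (hκ' : -Real.pi < κ'.im ∧ κ'.im ≤ Real.pi)
    (hψ : -Real.pi < ψ ∧ ψ ≤ Real.pi) (hψ' : -Real.pi < ψ' ∧ ψ' ≤ Real.pi)
    (hC : PreservesHmat C) (hP : PreservesHmat P) (hPdet : IsUnit P.det)
    (hrow : P 0 1 ≠ 0 ∨ P 0 2 ≠ 0)
    (hind : LinearIndependent ℂ
      ![Pi.single 0 1, Pi.single 3 1, P *ᵥ Pi.single 3 1, P *ᵥ Pi.single 0 1])
    (hCE : C * Emat lam phi = Emat lam phi * C)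
    (hCP : C * (P * Emat κ ψ) = P * Emat κ' ψ' * C) : κ = κ' ∧ ψ = ψ' := by
  rw [eq_blockMat_of_commute_Emat hlam phi hCE] at hC hCP
  generalize C 0 0 = c, C.submatrix midIdx midIdx = M, C 3 3 = c' at hC hCP
  obtain ⟨hcc', hM⟩ := hC.of_blockMat
  have hcc := star_mul_self_eq_one_of_blockMat hM hrow hCP
  obtain rfl : c = c' := mul_left_cancel₀ (left_ne_zero_of_mul_eq_one hcc) (hcc.trans hcc'.symm)
  have hc : c ≠ 0 := right_ne_zero_of_mul_eq_one hcc
  obtain rfl : κ = κ' := eq_of_exp_eq_of_im_mem hκ hκ'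
    (exp_eq_exp_of_blockMat (hP.apply_zero_zero_ne_zero_or (hind.ne_zero 3)) hc hCP)
  rw [eq_smul_one_of_blockMat (isUnit_det_submatrix_of_linearIndependent hind) hCP,
    blockMat_smul_one, smul_mul, Matrix.one_mul, Matrix.mul_smul, Matrix.mul_one] at hCP
  have hPE := smul_right_injective Mat4 hc hCP
  refine ⟨rfl, eq_of_Emat_eq (κ := κ) hψ hψ' ?_⟩
  rw [← nonsing_inv_mul_cancel_left P (Emat κ ψ) hPdet, hPE, nonsing_inv_mul_cancel_left _ _ hPdet]

lemma etaV_eq_zero_of_apply_eq_zero {Q P : Mat4} (hQ : PreservesHmat Q) (a : Vec4) {j : Fin 4}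
    (h : P 0 j = 0) : etaV a (Q *ᵥ Pi.single 3 1) (Q *ᵥ (P *ᵥ Pi.single j 1)) = 0 := by
  rw [etaV, hermForm_mulVec hQ (P *ᵥ _), hermForm_single_three]
  simp [h]

lemma NonSingularV.inv_conj {Q B : Mat4} (hQ : PreservesHmat Q) (hQdet : IsUnit Q.det)
    (h : NonSingularV (Q *ᵥ Pi.single 0 1) (Q *ᵥ Pi.single 1 1) (Q *ᵥ Pi.single 2 1)
      (Q *ᵥ Pi.single 3 1) (B *ᵥ (Q *ᵥ Pi.single 3 1)) (B *ᵥ (Q *ᵥ Pi.single 1 1))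
      (B *ᵥ (Q *ᵥ Pi.single 2 1)) (B *ᵥ (Q *ᵥ Pi.single 0 1))) :
    ((Q⁻¹ * B * Q) 0 1 ≠ 0 ∨ (Q⁻¹ * B * Q) 0 2 ≠ 0) ∧
      LinearIndependent ℂ ![Pi.single 0 1, Pi.single 3 1,
        (Q⁻¹ * B * Q) *ᵥ Pi.single 3 1, (Q⁻¹ * B * Q) *ᵥ Pi.single 0 1] := by
  simp only [← mulVec_inv_conj hQdet B] at h
  obtain ⟨-, hind, heta, -⟩ := h
  refine ⟨heta.imp (mt (etaV_eq_zero_of_apply_eq_zero hQ _))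
    (mt (etaV_eq_zero_of_apply_eq_zero hQ _)), LinearIndependent.of_comp Q.mulVecLin ?_⟩
  convert hind using 1
  ext i : 1
  fin_cases i <;> rfl

/-- closing a handle: `⟨A, BK⟩` is conjugate to `⟨A, BK'⟩` by an
element commuting with `A` iff the twist-bend parameters agree. -/
theorem closing_handle_twist_bend (Q : Mat4) (hQ : isSU31 Q)
    (lam : ℂ) (hlam : 0 < lam.re) (phi : ℝ)
    (A : Mat4) (hA : A = Q * Emat lam phi * Q⁻¹)
    (aA xA yA rA : Vec4)
    (haA : aA = Q.mulVec (Pi.single 0 1)) (hxA : xA = Q.mulVec (Pi.single 1 1))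
    (hyA : yA = Q.mulVec (Pi.single 2 1)) (hrA : rA = Q.mulVec (Pi.single 3 1))
    (B : Mat4) (hB : isSU31 B)
    (hns : NonSingularV aA xA yA rA
      (B.mulVec rA) (B.mulVec xA) (B.mulVec yA) (B.mulVec aA))
    (κ κ' : ℂ) (hκ : -Real.pi < κ.im ∧ κ.im ≤ Real.pi)
    (hκ' : -Real.pi < κ'.im ∧ κ'.im ≤ Real.pi)
    (ψ ψ' : ℝ) (hψ : -Real.pi < ψ ∧ ψ ≤ Real.pi) (hψ' : -Real.pi < ψ' ∧ ψ' ≤ Real.pi)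
    (K K' : Mat4) (hK : K = Q * Emat κ ψ * Q⁻¹) (hK' : K' = Q * Emat κ' ψ' * Q⁻¹) :
    (∃ D : Mat4, isSU31 D ∧ D * A * D⁻¹ = A ∧ D * (B * K) * D⁻¹ = B * K') ↔
      (κ = κ' ∧ ψ = ψ') := by
  subst hA hK hK' haA hxA hyA hrA
  have hQdet : IsUnit Q.det := by simp [hQ.2]
  refine ⟨fun ⟨D, hD, hDA, hDK⟩ => ?_, fun ⟨hκκ', hψψ'⟩ => ?_⟩
  · have hDdet : IsUnit D.det := by simp [hD.2]
    obtain ⟨hrow, hind⟩ := hns.inv_conj hQ.1 hQdet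
    have hCE := inv_conj_mul_eq_of_conj_eq hQdet hDdet hDA
    have hCP := inv_conj_mul_eq_of_conj_eq hQdet hDdet hDK
    rw [inv_conj_conj hQdet] at hCE
    rw [← inv_conj_mul_inv_conj hQdet B, ← inv_conj_mul_inv_conj hQdet B, inv_conj_conj hQdet,
      inv_conj_conj hQdet] at hCP
    exact eq_of_commute_Emat hlam hκ hκ' hψ hψ' (PreservesHmat.inv_conj hQ.1 hQdet hD.1)
      (PreservesHmat.inv_conj hQ.1 hQdet hB.1) (by simp [hB.2, hQ.2]) hrow hind hCE hCP
  · subst hκκ' hψψ'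
    exact ⟨1, ⟨by simp, by simp⟩, by simp, by simp⟩
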